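/- In the forward 3-cycle semigroup (relations f_j e_i = e_{i+j} f_i with indices in ℤ/2), for any word u = i_1 i_2 ⋯ i_k over ℤ/2 and any r ≥ 0, pulling the word u through r single f-letters transforms u into the word whose s-th letter is Σ_{p≥0} C(r,p)·i_{s-p} (indices mod k, arithmetic mod 2), where C(r,p) are binomial coefficients. In particular, if k = 2ⁿ − 1 and the word u satisfies i_1 + i_2 + ⋯ + i_k ≡ 0 (mod 2), then there is a word v of length k in the f-generators such that e_u f_v = f_v e_u. -/

import Mathlib

inductive TwoGraphGen (I J : Type) : Type
  | e : I → TwoGraphGen I J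
  | f : J → TwoGraphGen I J

def twoGraphRel {I J : Type} (θ : Equiv.Perm (I × J)) :
    FreeMonoid (TwoGraphGen I J) → FreeMonoid (TwoGraphGen I J) → Prop :=
  fun a b => ∃ i j,
    a = FreeMonoid.of (TwoGraphGen.e i) * FreeMonoid.of (TwoGraphGen.f j) ∧
    b = FreeMonoid.of (TwoGraphGen.f (θ (i, j)).2) * FreeMonoid.of (TwoGraphGen.e (θ (i, j)).1)

def FTheta {I J : Type} (θ : Equiv.Perm (I × J)) : Type :=
  (conGen (twoGraphRel θ)).Quotient

instance {I J : Type} (θ : Equiv.Perm (I × J)) : Monoid (FTheta θ) :=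
  inferInstanceAs (Monoid (conGen (twoGraphRel θ)).Quotient)

def FTheta.E {I J : Type} (θ : Equiv.Perm (I × J)) (i : I) : FTheta θ :=
  (conGen (twoGraphRel θ)).mk' (FreeMonoid.of (TwoGraphGen.e i))

def FTheta.F {I J : Type} (θ : Equiv.Perm (I × J)) (j : J) : FTheta θ :=
  (conGen (twoGraphRel θ)).mk' (FreeMonoid.of (TwoGraphGen.f j))

def FTheta.eWord {I J : Type} (θ : Equiv.Perm (I × J)) (u : List I) : FTheta θ :=
  (u.map (FTheta.E θ)).prod

def FTheta.fWord {I J : Type} (θ : Equiv.Perm (I × J)) (v : List J) : FTheta θ :=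
  (v.map (FTheta.F θ)).prod

/-- The permutation of (ℤ/2)² giving the forward 3-cycle semigroup: the relations
f_j e_i = e_{i+j} f_i read e_a f_b = f_{a+b} e_b, i.e. θ(a,b) = (b, a+b). -/
def fwdTheta : Equiv.Perm (ZMod 2 × ZMod 2) where
  toFun p := (p.2, p.1 + p.2)
  invFun p := (p.1 + p.2, p.1)
  left_inv := by decide
  right_inv := by decide

/-- The word i₁ i₂ ⋯ i_k (letters indexed cyclically). -/
def wordOf (k : ℕ) (g : ZMod k → ZMod 2) : List (ZMod 2) :=
  (List.range k).map (fun s => g ((s : ZMod k) + 1))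

/-- The result of pulling the cyclic word i through r single f-letters: the s-th
letter is ∑_p C(r,p)·i_{s-p}. -/
def pulled (k : ℕ) (i : ZMod k → ZMod 2) (r : ℕ) (s : ZMod k) : ZMod 2 :=
  ∑ p ∈ Finset.range (r + 1), (r.choose p : ZMod 2) * i (s - (p : ZMod k))


/-!
Pulling a single `f`-letter through a word `e_u` uses `f_c e_b = e_{b+c} f_b` letter by letter, so
it replaces each letter of `u` by the sum of it and its predecessor, and lets out the last letter
of `u`; feeding in the last letter of the cyclic word as `c` turns `u` into its cyclic difference
`u + σu`. After `r` pulls the word is `(1 + σ)^r u`, whose letters are the binomial sums of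
`pulled`. For `k = 2ⁿ - 1` every `C(k, p)` is odd, so `(1 + σ)^k u = u + (∑ u)·𝟙`, which is `u`
again when the letters of `u` sum to zero: the `k` letters let out on the way form `v`.
-/

open Finset

lemma cast_choose_two_pow_sub_one (n : ℕ) {p : ℕ} (hp : p ≤ 2 ^ n - 1) :
    ((2 ^ n - 1).choose p : ZMod 2) = 1 := by
  induction p with
  | zero => simp
  | succ p ih =>
    have hpascal : ((2 ^ n).choose (p + 1) : ZMod 2) =
        (2 ^ n - 1).choose p + (2 ^ n - 1).choose (p + 1) := by
      rw [← Nat.cast_add, ← Nat.choose_succ_succ', Nat.sub_add_cancel Nat.one_le_two_pow]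
    have heven : ((2 ^ n).choose (p + 1) : ZMod 2) = 0 :=
      (ZMod.natCast_eq_zero_iff _ 2).2 (Nat.prime_two.dvd_choose_pow (by omega) (by omega))
    rw [heven, ih (by omega)] at hpascal
    grind

lemma ZMod.sum_range_natCast {k : ℕ} [NeZero k] {M : Type*} [AddCommMonoid M]
    (f : ZMod k → M) : ∑ p ∈ range k, f p = ∑ t, f t :=
  sum_nbij' Nat.cast ZMod.val (fun _ _ => mem_univ _) (fun t _ => mem_range.2 t.val_lt)
    (fun _ hp => ZMod.val_cast_of_lt (mem_range.1 hp)) (fun t _ => ZMod.natCast_zmod_val t)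
    (fun _ _ => rfl)

lemma SemiconjBy.prod_map_reverse_range {M : Type*} [Monoid M] {a x : ℕ → M}
    (h : ∀ r, SemiconjBy (a r) (x r) (x (r + 1))) (r : ℕ) :
    SemiconjBy ((List.range r).reverse.map a).prod (x 0) (x r) := by
  induction r with
  | zero => simp
  | succ r ih =>
    rw [List.range_succ, List.reverse_append, List.map_append, List.prod_append]
    simpa using (h r).mul_left ih

namespace FTheta

variable {I J : Type} (θ : Equiv.Perm (I × J))

lemma eWord_append (u v : List I) : eWord θ (u ++ v) = eWord θ u * eWord θ v := by
  simp [eWord]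

lemma E_mul_F (i : I) (j : J) : E θ i * F θ j = F θ (θ (i, j)).2 * E θ (θ (i, j)).1 :=
  (Con.eq _).2 (ConGen.Rel.of _ _ ⟨i, j, rfl, rfl⟩)

end FTheta

open FTheta

lemma fwdTheta_F_mul_E (c b : ZMod 2) :
    F fwdTheta c * E fwdTheta b = E fwdTheta (b + c) * F fwdTheta b := by
  have hc : b + c + b = c := by grind
  simpa [fwdTheta, hc] using (E_mul_F fwdTheta (b + c) b).symm

lemma fwdTheta_F_mul_eWord (g : ℕ → ZMod 2) (m : ℕ) :
    F fwdTheta (g 0) * eWord fwdTheta ((List.range m).map fun s => g (s + 1)) =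
      eWord fwdTheta ((List.range m).map fun s => g (s + 1) + g s) * F fwdTheta (g m) := by
  induction m with
  | zero => simp [eWord]
  | succ m ih =>
    simp only [List.range_succ, List.map_append, eWord_append, ← mul_assoc, ih]
    simp [eWord, mul_assoc, fwdTheta_F_mul_E]

-- The binder of `wordOf` elaborates at type `ZMod k`, with `List.range k` coerced by a monadic lift.
lemma wordOf_eq_map_range (k : ℕ) (g : ZMod k → ZMod 2) :
    wordOf k g = (List.range k).map fun s : ℕ => g ((s : ZMod k) + 1) := by
  simp [wordOf, ← List.map_eq_flatMap, List.map_map, Function.comp_def]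

lemma pulled_zero (k : ℕ) (i : ZMod k → ZMod 2) : pulled k i 0 = i := by
  funext s
  simp [pulled]

lemma pulled_succ (k : ℕ) (i : ZMod k → ZMod 2) (r : ℕ) (s : ZMod k) :
    pulled k i (r + 1) s = pulled k i r s + pulled k i r (s - 1) := by
  have := sum_choose_succ_mul (R := ZMod 2) (fun p _ => i (s - p)) r
  simp only [Nat.cast_add, Nat.cast_one, sub_add_eq_sub_sub_swap] at this
  exact this

lemma pulled_semiconjBy (k : ℕ) (i : ZMod k → ZMod 2) (r : ℕ) :
    SemiconjBy (F fwdTheta (pulled k i r 0)) (eWord fwdTheta (wordOf k (pulled k i r)))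
      (eWord fwdTheta (wordOf k (pulled k i (r + 1)))) := by
  have h := fwdTheta_F_mul_eWord (fun s => pulled k i r s) k
  simp only [Nat.cast_zero, ZMod.natCast_self, Nat.cast_add, Nat.cast_one] at h
  simpa only [SemiconjBy, wordOf_eq_map_range, pulled_succ, add_sub_cancel_right] using h

lemma pulled_self_of_cast_choose_eq_one {k : ℕ} {i : ZMod k → ZMod 2}
    (hchoose : ∀ p ≤ k, (k.choose p : ZMod 2) = 1)
    (hsum : ∑ s ∈ range k, i ((s : ZMod k) + 1) = 0) : pulled k i k = i := by
  funext s
  rcases eq_zero_or_neZero k with rfl | _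
  · simp [pulled]
  calc pulled k i k s = ∑ p ∈ range k, i (s - p) + i s := by
        rw [pulled, sum_congr rfl fun p hp => by rw [hchoose p (mem_range_succ_iff.1 hp), one_mul],
          sum_range_succ, ZMod.natCast_self, sub_zero]
    _ = ∑ p ∈ range k, i ((p : ZMod k) + 1) + i s := by
        rw [ZMod.sum_range_natCast (fun t => i (s - t)), ZMod.sum_range_natCast (fun t => i (t + 1))]
        exact congrArg (· + i s)
          ((Equiv.sum_comp (Equiv.subLeft s) i).trans (Equiv.sum_comp (Equiv.addRight 1) i).symm)
    _ = i s := by rw [hsum, zero_add]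

theorem forward_three_cycle_pulling_general (k : ℕ) (i : ZMod k → ZMod 2) :
    (∀ r : ℕ,
      FTheta.F fwdTheta (pulled k i r 0) *
          FTheta.eWord fwdTheta (wordOf k (pulled k i r)) =
        FTheta.eWord fwdTheta (wordOf k (pulled k i (r + 1))) *
          FTheta.F fwdTheta (pulled k i r 0)) ∧
    (∀ n : ℕ, k = 2 ^ n - 1 →
      (∑ s ∈ Finset.range k, i ((s : ZMod k) + 1)) = 0 →
      ∃ v : List (ZMod 2), v.length = k ∧
        FTheta.eWord fwdTheta (wordOf k i) * FTheta.fWord fwdTheta v =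
          FTheta.fWord fwdTheta v * FTheta.eWord fwdTheta (wordOf k i)) := by
  refine ⟨pulled_semiconjBy k i, fun n hkn hsum => ?_⟩
  subst hkn
  have hfix : pulled _ i (2 ^ n - 1) = i :=
    pulled_self_of_cast_choose_eq_one (fun _ hp => cast_choose_two_pow_sub_one n hp) hsum
  refine ⟨(List.range (2 ^ n - 1)).reverse.map fun r => pulled _ i r 0, by simp, ?_⟩
  have h := SemiconjBy.prod_map_reverse_range (pulled_semiconjBy _ i) (2 ^ n - 1)
  rw [pulled_zero, hfix] at h
  simpa [fWord, List.map_map, Function.comp_def] using h.eq.symm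

/-- In the forward 3-cycle semigroup, pulling a cyclic word u of length k
through r single f-letters yields the word with s-th letter ∑_p C(r,p)·i_{s-p}; and if
k = 2ⁿ - 1 and the letters of u sum to 0 mod 2, then there is a word v of length k in
the f-generators with e_u f_v = f_v e_u. -/
theorem forward_three_cycle_pulling (k : ℕ) (hk : 0 < k) (i : ZMod k → ZMod 2) :
    (∀ r : ℕ,
      FTheta.F fwdTheta (pulled k i r 0) *
          FTheta.eWord fwdTheta (wordOf k (pulled k i r)) =
        FTheta.eWord fwdTheta (wordOf k (pulled k i (r + 1))) *
          FTheta.F fwdTheta (pulled k i r 0)) ∧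
    (∀ n : ℕ, k = 2 ^ n - 1 →
      (∑ s ∈ Finset.range k, i ((s : ZMod k) + 1)) = 0 →
      ∃ v : List (ZMod 2), v.length = k ∧
        FTheta.eWord fwdTheta (wordOf k i) * FTheta.fWord fwdTheta v =
          FTheta.fWord fwdTheta v * FTheta.eWord fwdTheta (wordOf k i)) :=
  forward_three_cycle_pulling_general k i
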